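/- arXiv:2005.07284 — 5 statements merged into one kernel-verified Lean document; each statement's English description precedes it below -/
import Mathlib

section
/- Let c3 > 0 and 0 < ε < 1. Let V : [0,∞) → ℝ be a differentiable function with V(t) > 0 for all t ≥ 0, let d : [0,∞) → ℝ be a continuous function with d(t) ≥ 0 for all t ≥ 0, and suppose the relaxed CLF inequality V'(t) ≤ −(c3/ε)·V(t) + d(t) holds for all t ≥ 0. Define the scaled total relaxation w(t) = ∫₀ᵗ d(τ)/V(τ) dτ. Then V(t) ≤ e^{−(c3/ε)t + w(t)}·V(0) for all t ≥ 0. -/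
/-!
Dividing the inequality by `V > 0` gives `(log V)' ≤ -(c3/ε) + d/V`, so
`log V(t) + (c3/ε) t - w(t)` is antitone; comparing its values at `t` and `0` and
exponentiating yields the bound.
-/

open Set Real

theorem le_exp_integral_mul_of_deriv_le_mul {V g : ℝ → ℝ} {a b : ℝ} (hab : a ≤ b)
    (hVcont : ContinuousOn V (Icc a b)) (hVdiff : ∀ x ∈ Ioo a b, DifferentiableAt ℝ V x)
    (hVpos : ∀ x ∈ Icc a b, 0 < V x) (hg : ContinuousOn g (Icc a b))
    (hle : ∀ x ∈ Ioo a b, deriv V x ≤ g x * V x) :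
    V b ≤ exp (∫ x in a..b, g x) * V a := by
  set f : ℝ → ℝ := fun s => log (V s) - ∫ x in a..s, g x
  have hf_cont : ContinuousOn f (Icc a b) := by
    refine (hVcont.log fun x hx => (hVpos x hx).ne').sub ?_
    rw [← uIcc_of_le hab]
    exact intervalIntegral.continuousOn_primitive_interval
      ((uIcc_of_le hab).symm ▸ hg.integrableOn_Icc)
  have hf_deriv : ∀ x ∈ Ioo a b, HasDerivAt f (deriv V x / V x - g x) x := by
    intro x hx
    have hx' : x ∈ Icc a b := Ioo_subset_Icc_self hx
    have hg_at : ContinuousAt g x := hg.continuousAt (Icc_mem_nhds hx.1 hx.2)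
    have hprim : HasDerivAt (fun s => ∫ y in a..s, g y) (g x) x :=
      intervalIntegral.integral_hasDerivAt_right
        (hg.mono (uIcc_of_le hx.1.le ▸ Icc_subset_Icc_right hx.2.le)).intervalIntegrable
        ((hg.mono Ioo_subset_Icc_self).stronglyMeasurableAtFilter isOpen_Ioo x hx) hg_at
    exact ((hVdiff x hx).hasDerivAt.log (hVpos x hx').ne').sub hprim
  have hf_anti : AntitoneOn f (Icc a b) := by
    refine antitoneOn_of_deriv_nonpos (convex_Icc a b) hf_cont ?_ ?_ <;> rw [interior_Icc]
    · exact fun x hx => (hf_deriv x hx).differentiableAt.differentiableWithinAt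
    · intro x hx
      have hVx := hVpos x (Ioo_subset_Icc_self hx)
      rw [(hf_deriv x hx).deriv, sub_nonpos, div_le_iff₀ hVx]
      exact hle x hx
  have hlog : log (V b) ≤ (∫ x in a..b, g x) + log (V a) := by
    have := hf_anti (left_mem_Icc.2 hab) (right_mem_Icc.2 hab) hab
    simp only [f, intervalIntegral.integral_same, sub_zero] at this
    linarith
  calc V b = exp (log (V b)) := (exp_log (hVpos b (right_mem_Icc.2 hab))).symm
    _ ≤ exp ((∫ x in a..b, g x) + log (V a)) := exp_le_exp.2 hlog
    _ = exp (∫ x in a..b, g x) * V a := by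
        rw [exp_add, exp_log (hVpos a (left_mem_Icc.2 hab))]

theorem stmt_1_general (c3 ε : ℝ)
    (V d : ℝ → ℝ)
    (hVdiff : ∀ t, 0 ≤ t → DifferentiableAt ℝ V t)
    (hVpos : ∀ t, 0 ≤ t → 0 < V t)
    (hdcont : Continuous d)
    (hineq : ∀ t, 0 ≤ t → deriv V t ≤ -(c3 / ε) * V t + d t)
    (w : ℝ → ℝ) (hw : ∀ t, w t = ∫ τ in (0:ℝ)..t, d τ / V τ) :
    ∀ t, 0 ≤ t → V t ≤ Real.exp (-(c3 / ε) * t + w t) * V 0 := by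
  intro t ht
  have hVcont : ContinuousOn V (Icc 0 t) :=
    fun x hx => (hVdiff x hx.1).continuousAt.continuousWithinAt
  have hrate : ContinuousOn (fun s => d s / V s) (Icc 0 t) :=
    hdcont.continuousOn.div hVcont fun x hx => (hVpos x hx.1).ne'
  have hint : ∫ s in (0:ℝ)..t, (-(c3 / ε) + d s / V s) = -(c3 / ε) * t + w t := by
    rw [intervalIntegral.integral_add intervalIntegrable_const
      (hrate.intervalIntegrable_of_Icc ht), intervalIntegral.integral_const, hw]
    simp [mul_comm]
  rw [← hint]
  refine le_exp_integral_mul_of_deriv_le_mul ht hVcont (fun x hx => hVdiff x hx.1.le)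
    (fun x hx => hVpos x hx.1) (continuousOn_const.add hrate) fun x hx => ?_
  calc deriv V x ≤ -(c3 / ε) * V x + d x := hineq x hx.1.le
    _ = (-(c3 / ε) + d x / V x) * V x := by field_simp [(hVpos x hx.1.le).ne']

theorem stmt_1 (c3 ε : ℝ) (hc3 : 0 < c3) (hε0 : 0 < ε) (hε1 : ε < 1)
    (V d : ℝ → ℝ)
    (hVdiff : ∀ t, 0 ≤ t → DifferentiableAt ℝ V t)
    (hVpos : ∀ t, 0 ≤ t → 0 < V t)
    (hdcont : Continuous d) (hd0 : ∀ t, 0 ≤ t → 0 ≤ d t)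
    (hineq : ∀ t, 0 ≤ t → deriv V t ≤ -(c3 / ε) * V t + d t)
    (w : ℝ → ℝ) (hw : ∀ t, w t = ∫ τ in (0:ℝ)..t, d τ / V τ) :
    ∀ t, 0 ≤ t → V t ≤ Real.exp (-(c3 / ε) * t + w t) * V 0 :=
  stmt_1_general c3 ε V d hVdiff hVpos hdcont hineq w hw
end

section
/- Let c1, c2, c3 > 0 and 0 < ε < 1. Let V : [0,∞) → ℝ be a differentiable function with V(t) > 0 for all t ≥ 0, let η : [0,∞) → ℝ^n satisfy c1·‖η(t)‖² ≤ V(t) ≤ (c2/ε²)·‖η(t)‖² for all t ≥ 0, let d : [0,∞) → ℝ be continuous with d(t) ≥ 0, and suppose V'(t) ≤ −(c3/ε)·V(t) + d(t) for all t ≥ 0. Define w(t) = ∫₀ᵗ d(τ)/V(τ) dτ. Then ‖η(t)‖ ≤ √(c2/c1)·(1/ε)·e^{−(c3/(2ε))t + w(t)/2}·‖η(0)‖ for all t ≥ 0. -/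
/-!
Dividing the relaxation by `V` turns the relaxed CLF inequality into the linear differential
inequality `V' ≤ (-(c3/ε) + d/V) V`, whose integrating factor gives Grönwall's bound
`V t ≤ V 0 · exp (-(c3/ε) t + w t)`. The two sandwich bounds, at `t` and at `0`, turn this into the
bound on `‖η t‖`, and taking square roots halves the exponent.
-/

open MeasureTheory intervalIntegral Set

theorem hasDerivAt_integral_of_continuousOn_Icc {g : ℝ → ℝ} {a b s : ℝ}
    (hg : ContinuousOn g (Icc a b)) (hs : s ∈ Ioo a b) :
    HasDerivAt (fun u => ∫ x in a..u, g x) (g s) s := by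
  refine integral_hasDerivAt_right ?_ ?_ (hg.continuousAt (Icc_mem_nhds hs.1 hs.2))
  · exact (hg.mono (uIcc_of_le hs.1.le ▸ Icc_subset_Icc_right hs.2.le)).intervalIntegrable
  · exact (hg.mono Ioo_subset_Icc_self).stronglyMeasurableAtFilter isOpen_Ioo s hs

theorem le_mul_exp_integral_of_deriv_le_mul {V g : ℝ → ℝ} {a b : ℝ} (hab : a ≤ b)
    (hV : ContinuousOn V (Icc a b)) (hVdiff : ∀ s ∈ Ioo a b, DifferentiableAt ℝ V s)
    (hg : ContinuousOn g (Icc a b)) (hle : ∀ s ∈ Ioo a b, deriv V s ≤ g s * V s) :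
    V b ≤ V a * Real.exp (∫ s in a..b, g s) := by
  set G : ℝ → ℝ := fun u => ∫ x in a..u, g x
  -- `V · exp (-G)` is nonincreasing, since its derivative is `(V' - g V) exp (-G) ≤ 0`.
  set F : ℝ → ℝ := fun s => V s * Real.exp (-G s)
  have hF' : ∀ s ∈ Ioo a b,
      HasDerivAt F ((deriv V s - g s * V s) * Real.exp (-G s)) s := fun s hs => by
    refine ((hVdiff s hs).hasDerivAt.mul
      (hasDerivAt_integral_of_continuousOn_Icc hg hs).fun_neg.exp).congr_deriv ?_
    ring
  have hG : ContinuousOn G (Icc a b) := by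
    have := continuousOn_primitive_interval (μ := volume)
      ((uIcc_of_le hab ▸ hg).integrableOn_compact isCompact_uIcc)
    rwa [uIcc_of_le hab] at this
  have hanti : AntitoneOn F (Icc a b) := by
    refine antitoneOn_of_deriv_nonpos (convex_Icc a b) (hV.mul (hG.neg.rexp)) ?_ ?_ <;>
      rw [interior_Icc]
    · exact fun s hs => (hF' s hs).differentiableAt.differentiableWithinAt
    · intro s hs
      rw [(hF' s hs).deriv]
      exact mul_nonpos_of_nonpos_of_nonneg (sub_nonpos.2 (hle s hs)) (Real.exp_pos _).le
  have hFb : F b ≤ V a := by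
    simpa [F, G] using hanti (left_mem_Icc.2 hab) (right_mem_Icc.2 hab) hab
  calc V b = F b * Real.exp (G b) := by simp [F, mul_assoc, ← Real.exp_add]
    _ ≤ V a * Real.exp (G b) := mul_le_mul_of_nonneg_right hFb (Real.exp_pos _).le

theorem le_sqrt_div_mul_mul_of_mul_sq_le {c c' k x y : ℝ} (hc : 0 < c) (hk : 0 ≤ k) (hy : 0 ≤ y)
    (h : c * x ^ 2 ≤ c' * k ^ 2 * y ^ 2) :
    x ≤ Real.sqrt (c' / c) * k * y := by
  calc x ≤ Real.sqrt (c' / c * (k * y) ^ 2) := by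
        refine Real.le_sqrt_of_sq_le ?_
        rw [div_mul_eq_mul_div, le_div_iff₀ hc]
        linarith
    _ = Real.sqrt (c' / c) * k * y := by
        rw [Real.sqrt_mul' _ (sq_nonneg _), Real.sqrt_sq (by positivity), mul_assoc]

theorem stmt_2_general (n : ℕ) (c1 c2 c3 ε : ℝ)
    (hc1 : 0 < c1) (hε0 : 0 < ε)
    (V d : ℝ → ℝ) (η : ℝ → EuclideanSpace ℝ (Fin n))
    (hVdiff : ∀ t, 0 ≤ t → DifferentiableAt ℝ V t)
    (hVpos : ∀ t, 0 ≤ t → 0 < V t)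
    (hsandwich : ∀ t, 0 ≤ t → c1 * ‖η t‖ ^ 2 ≤ V t ∧ V t ≤ (c2 / ε ^ 2) * ‖η t‖ ^ 2)
    (hdcont : Continuous d)
    (hineq : ∀ t, 0 ≤ t → deriv V t ≤ -(c3 / ε) * V t + d t)
    (w : ℝ → ℝ) (hw : ∀ t, w t = ∫ τ in (0:ℝ)..t, d τ / V τ) :
    ∀ t, 0 ≤ t →
      ‖η t‖ ≤ Real.sqrt (c2 / c1) * (1 / ε) *
        Real.exp (-(c3 / (2 * ε)) * t + w t / 2) * ‖η 0‖ := by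
  intro t ht
  have hV : ContinuousOn V (Icc 0 t) := fun s hs => (hVdiff s hs.1).continuousAt.continuousWithinAt
  have hdV : ContinuousOn (fun s => d s / V s) (Icc 0 t) :=
    hdcont.continuousOn.div hV fun s hs => (hVpos s hs.1).ne'
  have hgronwall := le_mul_exp_integral_of_deriv_le_mul (g := fun s => -(c3 / ε) + d s / V s) ht
    hV (fun s hs => hVdiff s hs.1.le) (continuousOn_const.add hdV) fun s hs => by
      rw [add_mul, div_mul_cancel₀ _ (hVpos s hs.1.le).ne']
      exact hineq s hs.1.le
  have hexponent : ∫ s in (0:ℝ)..t, (-(c3 / ε) + d s / V s) = -(c3 / ε) * t + w t := by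
    rw [integral_add intervalIntegrable_const (hdV.intervalIntegrable_of_Icc ht),
      intervalIntegral.integral_const, hw, smul_eq_mul, sub_zero, mul_comm]
  have hsq : Real.exp (-(c3 / ε) * t + w t) = Real.exp (-(c3 / (2 * ε)) * t + w t / 2) ^ 2 := by
    rw [sq, ← Real.exp_add]
    congr 1
    field_simp
    ring
  rw [mul_assoc (Real.sqrt _) (1 / ε)]
  refine le_sqrt_div_mul_mul_of_mul_sq_le hc1 (by positivity) (norm_nonneg _) ?_
  calc c1 * ‖η t‖ ^ 2 ≤ V t := (hsandwich t ht).1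
    _ ≤ V 0 * Real.exp (-(c3 / ε) * t + w t) := hexponent ▸ hgronwall
    _ ≤ c2 / ε ^ 2 * ‖η 0‖ ^ 2 * Real.exp (-(c3 / ε) * t + w t) :=
        mul_le_mul_of_nonneg_right (hsandwich 0 le_rfl).2 (Real.exp_pos _).le
    _ = c2 * (1 / ε * Real.exp (-(c3 / (2 * ε)) * t + w t / 2)) ^ 2 * ‖η 0‖ ^ 2 := by
        rw [hsq]
        field_simp

theorem stmt_2 (n : ℕ) (c1 c2 c3 ε : ℝ)
    (hc1 : 0 < c1) (hc2 : 0 < c2) (hc3 : 0 < c3) (hε0 : 0 < ε) (hε1 : ε < 1)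
    (V d : ℝ → ℝ) (η : ℝ → EuclideanSpace ℝ (Fin n))
    (hVdiff : ∀ t, 0 ≤ t → DifferentiableAt ℝ V t)
    (hVpos : ∀ t, 0 ≤ t → 0 < V t)
    (hsandwich : ∀ t, 0 ≤ t → c1 * ‖η t‖ ^ 2 ≤ V t ∧ V t ≤ (c2 / ε ^ 2) * ‖η t‖ ^ 2)
    (hdcont : Continuous d) (hd0 : ∀ t, 0 ≤ t → 0 ≤ d t)
    (hineq : ∀ t, 0 ≤ t → deriv V t ≤ -(c3 / ε) * V t + d t)
    (w : ℝ → ℝ) (hw : ∀ t, w t = ∫ τ in (0:ℝ)..t, d τ / V τ) :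
    ∀ t, 0 ≤ t →
      ‖η t‖ ≤ Real.sqrt (c2 / c1) * (1 / ε) *
        Real.exp (-(c3 / (2 * ε)) * t + w t / 2) * ‖η 0‖ :=
  stmt_2_general n c1 c2 c3 ε hc1 hε0 V d η hVdiff hVpos hsandwich hdcont hineq w hw
end

section
/- (Lemma 1, concrete form.) Let c1, c2, c3 > 0, 0 < ε < 1, and let T* > 0 and ΔT > 0 satisfy T* − ΔT > 0. Let V : [0,∞) → ℝ be differentiable with V(t) > 0 for all t ≥ 0, let η : [0,∞) → ℝ^n satisfy c1·‖η(t)‖² ≤ V(t) ≤ (c2/ε²)·‖η(t)‖² for all t ≥ 0, let d : [0,∞) → ℝ be continuous with d(t) ≥ 0, and suppose V'(t) ≤ −(c3/ε)·V(t) + d(t) for all t ≥ 0; set w(t) = ∫₀ᵗ d(τ)/V(τ) dτ. Let c̄3 be any constant with 0 < c̄3 ≤ c3 and (1/ε)·e^{−(c̄3/(2ε))(T*−ΔT)} ≤ 2e^{−1}/((T*−ΔT)·c3), and define w̄ = ((c3 − c̄3)/ε)·(T* − ΔT). If T_I is a time with T* − ΔT ≤ T_I ≤ T* + ΔT and w(T_I)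 ≤ w̄, then ‖η(T_I)‖ ≤ √(c2/c1)·(2e^{−1}/((T*−ΔT)·c3))·‖η(0)‖. -/
/-!
Along the relaxed CLF inequality, `log V t + (c3/ε) t - w t` is nonincreasing, since its
derivative is `V'/V + c3/ε - d/V ≤ 0`; hence `V T_I ≤ V 0 * exp (-(c3/ε) T_I + w T_I)`.
The budget `w T_I ≤ w̄` together with `T_I ≥ T* - ΔT` bounds the exponent by
`-(c̄3/ε)(T* - ΔT)`, the sandwich bounds turn this into a bound on `‖η T_I‖²`, and the
hypothesis on `c̄3` is the square root of the resulting constant.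
-/

open Set Real

section LogGronwall

variable {V d : ℝ → ℝ} {a b k : ℝ}

theorem antitoneOn_log_add_mul_sub_integral (hab : a ≤ b)
    (hVcont : ContinuousOn V (Icc a b)) (hVdiff : ∀ t ∈ Ioo a b, DifferentiableAt ℝ V t)
    (hVpos : ∀ t ∈ Icc a b, 0 < V t) (hd : ContinuousOn d (Icc a b))
    (hineq : ∀ t ∈ Ioo a b, deriv V t ≤ -k * V t + d t) :
    AntitoneOn (fun t => log (V t) + k * t - ∫ τ in a..t, d τ / V τ) (Icc a b) := by
  have hf : ContinuousOn (fun τ => d τ / V τ) (Icc a b) :=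
    hd.div hVcont fun t ht => (hVpos t ht).ne'
  have hderiv : ∀ x ∈ Ioo a b,
      HasDerivAt (fun t => log (V t) + k * t - ∫ τ in a..t, d τ / V τ)
        (deriv V x / V x + k - d x / V x) x := by
    intro x hx
    have hlog := (hVdiff x hx).hasDerivAt.log (hVpos x (Ioo_subset_Icc_self hx)).ne'
    have hprim : HasDerivAt (fun t => ∫ τ in a..t, d τ / V τ) (d x / V x) x :=
      intervalIntegral.integral_hasDerivAt_right
        ((hf.mono (Icc_subset_Icc_right hx.2.le)).intervalIntegrable_of_Icc hx.1.le)
        ((hf.mono Ioo_subset_Icc_self).stronglyMeasurableAtFilter isOpen_Ioo x hx)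
        (hf.continuousAt (Icc_mem_nhds hx.1 hx.2))
    exact (hlog.add ((hasDerivAt_id x).const_mul k |>.congr_deriv (mul_one k))).sub hprim
  refine antitoneOn_of_deriv_nonpos (convex_Icc a b) ?_ ?_ ?_
  · refine ((hVcont.log fun t ht => (hVpos t ht).ne').add
      (continuousOn_const.mul continuousOn_id)).sub ?_
    rw [← uIcc_of_le hab]
    exact intervalIntegral.continuousOn_primitive_interval
      ((uIcc_of_le hab).symm ▸ hf.integrableOn_compact isCompact_Icc)
  · rw [interior_Icc]
    exact fun x hx => (hderiv x hx).differentiableAt.differentiableWithinAt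
  · rw [interior_Icc]
    intro x hx
    have hVx := hVpos x (Ioo_subset_Icc_self hx)
    have hratio : deriv V x / V x ≤ -k + d x / V x := by
      rw [div_le_iff₀ hVx, add_mul, div_mul_cancel₀ _ hVx.ne']
      exact hineq x hx
    rw [(hderiv x hx).deriv]
    linarith

theorem le_mul_exp_integral_of_deriv_le (hab : a ≤ b)
    (hVcont : ContinuousOn V (Icc a b)) (hVdiff : ∀ t ∈ Ioo a b, DifferentiableAt ℝ V t)
    (hVpos : ∀ t ∈ Icc a b, 0 < V t) (hd : ContinuousOn d (Icc a b))
    (hineq : ∀ t ∈ Ioo a b, deriv V t ≤ -k * V t + d t) :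
    V b ≤ V a * exp (-k * (b - a) + ∫ τ in a..b, d τ / V τ) := by
  have hmono := antitoneOn_log_add_mul_sub_integral hab hVcont hVdiff hVpos hd hineq
    (left_mem_Icc.2 hab) (right_mem_Icc.2 hab) hab
  simp only [intervalIntegral.integral_same, sub_zero] at hmono
  have hVa := hVpos a (left_mem_Icc.2 hab)
  rw [← log_le_log_iff (hVpos b (right_mem_Icc.2 hab)) (by positivity),
    log_mul hVa.ne' (exp_pos _).ne', log_exp]
  linarith

end LogGronwall

theorem le_sqrt_div_mul_of_mul_sq_le {x y a b : ℝ} (ha : 0 < a) (hy : 0 ≤ y)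
    (h : a * x ^ 2 ≤ b * y ^ 2) : x ≤ √(b / a) * y := by
  rw [← sqrt_sq hy, ← sqrt_mul' _ (sq_nonneg y)]
  refine le_sqrt_of_sq_le ?_
  rw [div_mul_eq_mul_div, le_div_iff₀ ha]
  linarith

theorem stmt_6_general (n : ℕ) (c1 c2 c3 ε : ℝ)
    (hc1 : 0 < c1) (hc2 : 0 < c2) (hc3 : 0 < c3) (hε0 : 0 < ε)
    (Tstar ΔT : ℝ) (hTd : 0 < Tstar - ΔT)
    (V d : ℝ → ℝ) (η : ℝ → EuclideanSpace ℝ (Fin n))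
    (hVdiff : ∀ t, 0 ≤ t → DifferentiableAt ℝ V t)
    (hVpos : ∀ t, 0 ≤ t → 0 < V t)
    (hsandwich : ∀ t, 0 ≤ t → c1 * ‖η t‖ ^ 2 ≤ V t ∧ V t ≤ (c2 / ε ^ 2) * ‖η t‖ ^ 2)
    (hdcont : Continuous d)
    (hineq : ∀ t, 0 ≤ t → deriv V t ≤ -(c3 / ε) * V t + d t)
    (w : ℝ → ℝ) (hw : ∀ t, w t = ∫ τ in (0:ℝ)..t, d τ / V τ)
    (c3bar : ℝ)
    (hc3bound : (1 / ε) * Real.exp (-(c3bar / (2 * ε)) * (Tstar - ΔT)) ≤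
      2 * Real.exp (-1) / ((Tstar - ΔT) * c3))
    (wbar : ℝ) (hwbar : wbar = ((c3 - c3bar) / ε) * (Tstar - ΔT))
    (TI : ℝ) (hTI1 : Tstar - ΔT ≤ TI)
    (hwTI : w TI ≤ wbar) :
    ‖η TI‖ ≤ Real.sqrt (c2 / c1) * (2 * Real.exp (-1) / ((Tstar - ΔT) * c3)) * ‖η 0‖ := by
  set L := Tstar - ΔT
  set K := 2 * exp (-1) / (L * c3)
  have hTI0 : 0 ≤ TI := hTd.le.trans hTI1
  have hdecay : V TI ≤ V 0 * exp (-(c3 / ε) * TI + w TI) := by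
    simpa [hw] using le_mul_exp_integral_of_deriv_le hTI0
      (fun t ht => (hVdiff t ht.1).continuousAt.continuousWithinAt)
      (fun t ht => hVdiff t ht.1.le) (fun t ht => hVpos t ht.1) hdcont.continuousOn
      (fun t ht => hineq t ht.1.le)
  have hexponent : -(c3 / ε) * TI + w TI ≤ -(c3bar / ε) * L := by
    have hlag : 0 ≤ c3 / ε * (TI - L) := mul_nonneg (by positivity) (sub_nonneg.2 hTI1)
    rw [hwbar, sub_div, sub_mul] at hwTI
    linarith
  have hconst : (1 / ε) ^ 2 * exp (-(c3bar / ε) * L) ≤ K ^ 2 := by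
    have hsq : (1 / ε) ^ 2 * exp (-(c3bar / ε) * L) =
        ((1 / ε) * exp (-(c3bar / (2 * ε)) * L)) ^ 2 := by
      rw [mul_pow, ← exp_nat_mul]
      ring_nf
    rw [hsq]
    exact pow_le_pow_left₀ (by positivity) hc3bound 2
  rw [mul_assoc]
  refine le_sqrt_div_mul_of_mul_sq_le hc1 (by positivity) ?_
  calc c1 * ‖η TI‖ ^ 2 ≤ V TI := (hsandwich TI hTI0).1
    _ ≤ V 0 * exp (-(c3bar / ε) * L) := hdecay.trans (by gcongr; exact (hVpos 0 le_rfl).le)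
    _ ≤ c2 / ε ^ 2 * ‖η 0‖ ^ 2 * exp (-(c3bar / ε) * L) := by
      gcongr
      exact (hsandwich 0 le_rfl).2
    _ = c2 * ‖η 0‖ ^ 2 * ((1 / ε) ^ 2 * exp (-(c3bar / ε) * L)) := by ring
    _ ≤ c2 * ‖η 0‖ ^ 2 * K ^ 2 := by gcongr
    _ = c2 * (K * ‖η 0‖) ^ 2 := by ring

theorem stmt_6 (n : ℕ) (c1 c2 c3 ε : ℝ)
    (hc1 : 0 < c1) (hc2 : 0 < c2) (hc3 : 0 < c3) (hε0 : 0 < ε) (hε1 : ε < 1)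
    (Tstar ΔT : ℝ) (hTstar : 0 < Tstar) (hΔT : 0 < ΔT) (hTd : 0 < Tstar - ΔT)
    (V d : ℝ → ℝ) (η : ℝ → EuclideanSpace ℝ (Fin n))
    (hVdiff : ∀ t, 0 ≤ t → DifferentiableAt ℝ V t)
    (hVpos : ∀ t, 0 ≤ t → 0 < V t)
    (hsandwich : ∀ t, 0 ≤ t → c1 * ‖η t‖ ^ 2 ≤ V t ∧ V t ≤ (c2 / ε ^ 2) * ‖η t‖ ^ 2)
    (hdcont : Continuous d) (hd0 : ∀ t, 0 ≤ t → 0 ≤ d t)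
    (hineq : ∀ t, 0 ≤ t → deriv V t ≤ -(c3 / ε) * V t + d t)
    (w : ℝ → ℝ) (hw : ∀ t, w t = ∫ τ in (0:ℝ)..t, d τ / V τ)
    (c3bar : ℝ) (hc3bar0 : 0 < c3bar) (hc3bar : c3bar ≤ c3)
    (hc3bound : (1 / ε) * Real.exp (-(c3bar / (2 * ε)) * (Tstar - ΔT)) ≤
      2 * Real.exp (-1) / ((Tstar - ΔT) * c3))
    (wbar : ℝ) (hwbar : wbar = ((c3 - c3bar) / ε) * (Tstar - ΔT))
    (TI : ℝ) (hTI1 : Tstar - ΔT ≤ TI) (hTI2 : TI ≤ Tstar + ΔT)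
    (hwTI : w TI ≤ wbar) :
    ‖η TI‖ ≤ Real.sqrt (c2 / c1) * (2 * Real.exp (-1) / ((Tstar - ΔT) * c3)) * ‖η 0‖ :=
  stmt_6_general n c1 c2 c3 ε hc1 hc2 hc3 hε0 Tstar ΔT hTd V d η hVdiff hVpos hsandwich hdcont hineq
    w hw c3bar hc3bound wbar hwbar TI hTI1 hwTI
end

section
/- Let c3 > 0, 0 < ε < 1, and let T* > 0 and ΔT > 0 satisfy T* − ΔT > 0. Let V : [0,∞) → ℝ be differentiable with V(t) > 0 for all t ≥ 0, let d : [0,∞) → ℝ be continuous with d(t) ≥ 0, and suppose V'(t) ≤ −(c3/ε)·V(t) + d(t) for all t ≥ 0; set w(t) = ∫₀ᵗ d(τ)/V(τ) dτ. Let c̄3 be any constant with 0 < c̄3 ≤ c3, define w̄ = ((c3 − c̄3)/ε)·(T* − ΔT), and let T_I be a time with T_I ≥ T* − ΔT and w(T_I) ≤ w̄. Then V(T_I) ≤ e^{−(c̄3/ε)(T*−ΔT)}·V(0). -/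
/-!
Along the trajectory, `(log V)' + c3/ε = V'/V + c3/ε ≤ d/V`, so integrating over `[0, T_I]` gives
`V(T_I) ≤ exp (-(c3/ε) T_I + w(T_I)) V(0)`. Since `T_I ≥ T* - ΔT` and `w(T_I) ≤ w̄`, the exponent is
at most `-(c3/ε)(T* - ΔT) + ((c3 - c̄3)/ε)(T* - ΔT) = -(c̄3/ε)(T* - ΔT)`.
-/

open Real Set

section RelaxedDecay

variable {V d : ℝ → ℝ} {k s t : ℝ}

theorem log_le_of_deriv_le_neg_mul_add (hst : s ≤ t) (hVc : ContinuousOn V (Icc s t))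
    (hVd : ∀ x ∈ Ioo s t, DifferentiableAt ℝ V x) (hVpos : ∀ x ∈ Icc s t, 0 < V x)
    (hd : ContinuousOn d (Icc s t)) (hineq : ∀ x ∈ Ioo s t, deriv V x ≤ -k * V x + d x) :
    log (V t) ≤ log (V s) - k * (t - s) + ∫ τ in s..t, d τ / V τ := by
  have hVne : ∀ x ∈ Icc s t, V x ≠ 0 := fun x hx => (hVpos x hx).ne'
  have hcont : ContinuousOn (fun x => log (V x) + k * x) (Icc s t) :=
    (hVc.log hVne).add (continuousOn_const.mul continuousOn_id)
  have hderiv : ∀ x ∈ Ioo s t,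
      HasDerivWithinAt (fun x => log (V x) + k * x) (deriv V x / V x + k) (Ioi x) x := by
    intro x hx
    have hlog := (hVd x hx).hasDerivAt.log (hVne x (Ioo_subset_Icc_self hx))
    exact (hlog.add ((hasDerivAt_id' x).const_mul k)).hasDerivWithinAt.congr_deriv (by simp)
  have hint : MeasureTheory.IntegrableOn (fun τ => d τ / V τ) (Icc s t) :=
    (hd.div hVc hVne).integrableOn_compact isCompact_Icc
  have hle : ∀ x ∈ Ioo s t, deriv V x / V x + k ≤ d x / V x := by
    intro x hx
    have hVx := hVpos x (Ioo_subset_Icc_self hx)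
    rw [div_add' _ _ _ hVx.ne', div_le_div_iff_of_pos_right hVx]
    linarith [hineq x hx]
  have := intervalIntegral.sub_le_integral_of_hasDeriv_right_of_le hst hcont hderiv hint hle
  linarith

theorem le_exp_mul_of_deriv_le_neg_mul_add (hst : s ≤ t) (hVc : ContinuousOn V (Icc s t))
    (hVd : ∀ x ∈ Ioo s t, DifferentiableAt ℝ V x) (hVpos : ∀ x ∈ Icc s t, 0 < V x)
    (hd : ContinuousOn d (Icc s t)) (hineq : ∀ x ∈ Ioo s t, deriv V x ≤ -k * V x + d x) :
    V t ≤ exp (-k * (t - s) + ∫ τ in s..t, d τ / V τ) * V s := by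
  have hVs := hVpos s (left_mem_Icc.mpr hst)
  have hVt := hVpos t (right_mem_Icc.mpr hst)
  rw [← log_le_log_iff hVt (by positivity), log_mul (exp_pos _).ne' hVs.ne', log_exp]
  linarith [log_le_of_deriv_le_neg_mul_add hst hVc hVd hVpos hd hineq]

end RelaxedDecay

theorem stmt_7_general (c3 ε : ℝ) (hc3 : 0 < c3) (hε0 : 0 < ε)
    (Tstar ΔT : ℝ) (hTd : 0 < Tstar - ΔT)
    (V d : ℝ → ℝ)
    (hVdiff : ∀ t, 0 ≤ t → DifferentiableAt ℝ V t)
    (hVpos : ∀ t, 0 ≤ t → 0 < V t)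
    (hdcont : Continuous d)
    (hineq : ∀ t, 0 ≤ t → deriv V t ≤ -(c3 / ε) * V t + d t)
    (w : ℝ → ℝ) (hw : ∀ t, w t = ∫ τ in (0:ℝ)..t, d τ / V τ)
    (c3bar : ℝ)
    (wbar : ℝ) (hwbar : wbar = ((c3 - c3bar) / ε) * (Tstar - ΔT))
    (TI : ℝ) (hTI1 : Tstar - ΔT ≤ TI) (hwTI : w TI ≤ wbar) :
    V TI ≤ Real.exp (-(c3bar / ε) * (Tstar - ΔT)) * V 0 := by
  have hTI : 0 ≤ TI := hTd.le.trans hTI1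
  have hdecay : V TI ≤ exp (-(c3 / ε) * (TI - 0) + w TI) * V 0 := by
    rw [hw]
    exact le_exp_mul_of_deriv_le_neg_mul_add hTI
      (fun x hx => (hVdiff x hx.1).continuousAt.continuousWithinAt)
      (fun x hx => hVdiff x hx.1.le) (fun x hx => hVpos x hx.1) hdcont.continuousOn
      (fun x hx => hineq x hx.1.le)
  have hexponent : -(c3 / ε) * (TI - 0) + w TI ≤ -(c3bar / ε) * (Tstar - ΔT) := by
    have hslower : (c3 / ε) * (Tstar - ΔT) ≤ (c3 / ε) * TI :=
      mul_le_mul_of_nonneg_left hTI1 (div_pos hc3 hε0).le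
    have hsplit : -(c3bar / ε) * (Tstar - ΔT)
        = -(c3 / ε) * (Tstar - ΔT) + ((c3 - c3bar) / ε) * (Tstar - ΔT) := by ring
    linarith
  exact hdecay.trans (by gcongr; linarith [hVpos 0 le_rfl])

theorem stmt_7 (c3 ε : ℝ) (hc3 : 0 < c3) (hε0 : 0 < ε) (hε1 : ε < 1)
    (Tstar ΔT : ℝ) (hTstar : 0 < Tstar) (hΔT : 0 < ΔT) (hTd : 0 < Tstar - ΔT)
    (V d : ℝ → ℝ)
    (hVdiff : ∀ t, 0 ≤ t → DifferentiableAt ℝ V t)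
    (hVpos : ∀ t, 0 ≤ t → 0 < V t)
    (hdcont : Continuous d) (hd0 : ∀ t, 0 ≤ t → 0 ≤ d t)
    (hineq : ∀ t, 0 ≤ t → deriv V t ≤ -(c3 / ε) * V t + d t)
    (w : ℝ → ℝ) (hw : ∀ t, w t = ∫ τ in (0:ℝ)..t, d τ / V τ)
    (c3bar : ℝ) (hc3bar0 : 0 < c3bar) (hc3bar : c3bar ≤ c3)
    (wbar : ℝ) (hwbar : wbar = ((c3 - c3bar) / ε) * (Tstar - ΔT))
    (TI : ℝ) (hTI1 : Tstar - ΔT ≤ TI) (hwTI : w TI ≤ wbar) :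
    V TI ≤ Real.exp (-(c3bar / ε) * (Tstar - ΔT)) * V 0 :=
  stmt_7_general c3 ε hc3 hε0 Tstar ΔT hTd V d hVdiff hVpos hdcont hineq w hw c3bar wbar hwbar TI
    hTI1 hwTI
end

section
/- Let γ > 0, T > 0, and let h : [0, T] → ℝ be continuously differentiable with h(0) > 0. Suppose that for every t ∈ [0, T] with h(t) > 0 one has h'(t) ≥ −γ·h(t)³. Then for all t ∈ [0, T], h(t) ≥ h(0)/√(1 + 2γ·h(0)²·t) > 0; in particular h(t) > 0 for all t ∈ [0, T]. -/
/-!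
With `B = 1 / h` the reciprocal barrier, the condition `h' ≥ -γ h³` says `(B²)' = -2 h' / h³ ≤ 2γ`
wherever `h > 0`, so `1 / h(t)² ≤ 1 / h(0)² + 2γt`, which is the claimed lower bound on `h`.
The bound is only available while `h` stays positive, but it keeps `h` uniformly away from `0` on
`[0, t]`, so by continuity `h` never reaches `0`.
-/

open Set

theorem inv_sq_le_of_neg_mul_pow_three_le_deriv {h h' : ℝ → ℝ} {γ a b : ℝ}
    (hderiv : ∀ t ∈ Icc a b, HasDerivAt h (h' t) t) (hpos : ∀ t ∈ Icc a b, 0 < h t)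
    (hcond : ∀ t ∈ Icc a b, -γ * h t ^ 3 ≤ h' t) :
    ∀ t ∈ Icc a b, (h t ^ 2)⁻¹ ≤ (h a ^ 2)⁻¹ + 2 * γ * (t - a) := by
  have hderiv_inv_sq : ∀ t ∈ Icc a b, HasDerivAt (fun s => (h s ^ 2)⁻¹)
      (-2 * h' t / h t ^ 3) t := fun t ht => by
    refine ((hderiv t ht).pow 2).inv (pow_pos (hpos t ht) 2).ne' |>.congr_deriv ?_
    have := (hpos t ht).ne'
    simp only [Pi.pow_apply]
    field_simp
    ring
  refine image_le_of_deriv_right_le_deriv_boundary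
    (fun t ht => (hderiv_inv_sq t ht).continuousAt.continuousWithinAt)
    (fun t ht => (hderiv_inv_sq t (Ico_subset_Icc_self ht)).hasDerivWithinAt)
    (by simp) (by fun_prop)
    (fun t _ => (((hasDerivAt_id t).sub_const a).const_mul (2 * γ)).const_add _ |>.hasDerivWithinAt)
    (fun t ht => ?_)
  have ht' := Ico_subset_Icc_self ht
  have hht := hpos t ht'
  have hcond_t := hcond t ht'
  rw [div_le_iff₀ (by positivity)]
  nlinarith [pow_pos hht 3]

theorem div_sqrt_le_of_inv_sq_le {x y γ t : ℝ} (hx : 0 < x) (hy : 0 < y)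
    (hxy : (y ^ 2)⁻¹ ≤ (x ^ 2)⁻¹ + 2 * γ * t) :
    x / Real.sqrt (1 + 2 * γ * x ^ 2 * t) ≤ y := by
  have hsq : x ^ 2 ≤ y ^ 2 * (1 + 2 * γ * x ^ 2 * t) := by
    have := mul_le_mul_of_nonneg_left hxy (by positivity : 0 ≤ x ^ 2 * y ^ 2)
    field_simp at this
    linarith
  have hpos : 0 < 1 + 2 * γ * x ^ 2 * t := by nlinarith [pow_pos hx 2]
  rw [div_le_iff₀ (Real.sqrt_pos.2 hpos), ← Real.sqrt_sq hy.le, ← Real.sqrt_mul (sq_nonneg y)]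
  exact Real.le_sqrt_of_sq_le hsq

theorem pos_on_Icc_of_lower_bound_while_pos {f : ℝ → ℝ} {a b m : ℝ} (hf : ContinuousOn f (Icc a b))
    (ha : 0 < f a) (hm : 0 < m) (hbound : ∀ t ∈ Icc a b, (∀ s ∈ Icc a t, 0 < f s) → m ≤ f t) :
    ∀ t ∈ Icc a b, 0 < f t := by
  by_contra! ⟨t, ht, hft⟩
  set Z := Icc a b ∩ f ⁻¹' Iic 0
  have hZ_bdd : BddBelow Z := ⟨a, fun x hx => hx.1.1⟩
  have hτ : sInf Z ∈ Z :=
    (hf.preimage_isClosed_of_isClosed isClosed_Icc isClosed_Iic).csInf_mem ⟨t, ht, hft⟩ hZ_bdd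
  -- `τ` is the first time `f` drops to `0`.
  set τ := sInf Z
  have hpos_before : ∀ s ∈ Ico a τ, 0 < f s := fun s hs => by
    by_contra! hfs
    exact (csInf_le hZ_bdd ⟨⟨hs.1, hs.2.le.trans hτ.1.2⟩, hfs⟩).not_gt hs.2
  have haτ : a < τ := hτ.1.1.lt_of_ne fun e => ha.not_ge (e ▸ hτ.2)
  have hm_before : ∀ s ∈ Ico a τ, m ≤ f s := fun s hs =>
    hbound s ⟨hs.1, hs.2.le.trans hτ.1.2⟩ fun u hu => hpos_before u ⟨hu.1, hu.2.trans_lt hs.2⟩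
  have hmτ : m ≤ f τ :=
    ContinuousWithinAt.closure_le (by simp [closure_Ico haτ.ne, haτ.le]) continuousWithinAt_const
      ((hf τ hτ.1).mono (Ico_subset_Icc_self.trans (Icc_subset_Icc_right hτ.1.2))) hm_before
  exact (hm.trans_le hmτ).not_ge hτ.2

theorem stmt_10_general (γ T : ℝ) (hγ : 0 < γ)
    (h h' : ℝ → ℝ)
    (hderiv : ∀ t ∈ Set.Icc (0:ℝ) T, HasDerivAt h (h' t) t)
    (h0 : 0 < h 0)
    (hcond : ∀ t ∈ Set.Icc (0:ℝ) T, 0 < h t → -γ * (h t) ^ 3 ≤ h' t) :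
    ∀ t ∈ Set.Icc (0:ℝ) T,
      h 0 / Real.sqrt (1 + 2 * γ * (h 0) ^ 2 * t) ≤ h t ∧ 0 < h t := by
  intro t ht
  have hsub : Icc 0 t ⊆ Icc 0 T := Icc_subset_Icc_right ht.2
  have hbound : ∀ s ∈ Icc 0 t, (∀ u ∈ Icc 0 s, 0 < h u) →
      h 0 / Real.sqrt (1 + 2 * γ * h 0 ^ 2 * s) ≤ h s := fun s hs hpos => by
    refine div_sqrt_le_of_inv_sq_le h0 (hpos s ⟨hs.1, le_rfl⟩) ?_
    simpa using inv_sq_le_of_neg_mul_pow_three_le_deriv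
      (fun u hu => hderiv u (hsub ⟨hu.1, hu.2.trans hs.2⟩)) hpos
      (fun u hu => hcond u (hsub ⟨hu.1, hu.2.trans hs.2⟩) (hpos u hu)) s ⟨hs.1, le_rfl⟩
  have hdecay : ∀ s ∈ Icc 0 t, h 0 / Real.sqrt (1 + 2 * γ * h 0 ^ 2 * t) ≤
      h 0 / Real.sqrt (1 + 2 * γ * h 0 ^ 2 * s) := fun s ⟨hs0, hst⟩ => by
    apply div_le_div_of_nonneg_left h0.le (by positivity)
    gcongr
  have hpos : ∀ s ∈ Icc 0 t, 0 < h s :=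
    pos_on_Icc_of_lower_bound_while_pos
      (fun s hs => (hderiv s (hsub hs)).continuousAt.continuousWithinAt) h0
      (by have := ht.1; positivity) fun s hs hpos => (hdecay s hs).trans (hbound s hs hpos)
  exact ⟨hbound t ⟨ht.1, le_rfl⟩ hpos, hpos t ⟨ht.1, le_rfl⟩⟩

theorem stmt_10 (γ T : ℝ) (hγ : 0 < γ) (hT : 0 < T)
    (h h' : ℝ → ℝ)
    (hderiv : ∀ t ∈ Set.Icc (0:ℝ) T, HasDerivAt h (h' t) t)
    (hcont : ContinuousOn h' (Set.Icc (0:ℝ) T))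
    (h0 : 0 < h 0)
    (hcond : ∀ t ∈ Set.Icc (0:ℝ) T, 0 < h t → -γ * (h t) ^ 3 ≤ h' t) :
    ∀ t ∈ Set.Icc (0:ℝ) T,
      h 0 / Real.sqrt (1 + 2 * γ * (h 0) ^ 2 * t) ≤ h t ∧ 0 < h t :=
  stmt_10_general γ T hγ h h' hderiv h0 hcond
end
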